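/- Let G be an undirected graph, s,t nonadjacent, and S a minimum s,t-separator. Let D be a connected component of G−S with s ∉ D and t ∉ D, and let T_D = N_G(D). Then for every nonempty A ⊆ D and every minimum s,t-separator T of G: A ⊆ C_s(G−T) if and only if T_D ∩ C_s(G−T) ≠ ∅. -/
import Mathlib


open SimpleGraph

variable {V : Type*}

/-- `u` can reach `v` in `G − S`: there is a walk whose support avoids `S`. -/
def ReachAvoid (G : SimpleGraph V) (S : Set V) (u v : V) : Prop :=
  ∃ p : G.Walk u v, ∀ w ∈ p.support, w ∉ S

/-- The union of the connected components of `G − S` that meet `X`. -/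
def SetReach (G : SimpleGraph V) (S X : Set V) : Set V :=
  {v | ∃ x ∈ X, ReachAvoid G S x v}

/-- Open neighborhood of a vertex set: vertices outside `X` adjacent to some vertex of `X`. -/
def Nbhd (G : SimpleGraph V) (X : Set V) : Set V :=
  {v | v ∉ X ∧ ∃ x ∈ X, G.Adj x v}

/-- `S` is an `A,B`-separator of `G`. -/
def IsSep (G : SimpleGraph V) (A B S : Set V) : Prop :=
  Disjoint S A ∧ Disjoint S B ∧ ∀ a ∈ A, ∀ b ∈ B, ¬ ReachAvoid G S a b

/-- `S` is an inclusion-minimal `A,B`-separator of `G`. -/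
def IsMinlSep (G : SimpleGraph V) (A B S : Set V) : Prop :=
  IsSep G A B S ∧ ∀ S' ⊂ S, ¬ IsSep G A B S'

/-- `S` is a minimum-cardinality `A,B`-separator of `G`. -/
def IsMinSep (G : SimpleGraph V) (A B S : Set V) : Prop :=
  IsSep G A B S ∧ ∀ S', IsSep G A B S' → S.ncard ≤ S'.ncard

/-- The minimum cardinality of an `A,B`-separator of `G` (`∞` if none exists). -/
noncomputable def kappa (G : SimpleGraph V) (A B : Set V) : ℕ∞ :=
  sInf {n : ℕ∞ | ∃ S : Set V, IsSep G A B S ∧ (S.ncard : ℕ∞) = n}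

lemma ReachAvoid.left_not_mem {G : SimpleGraph V} {S : Set V} {u v : V}
    (h : ReachAvoid G S u v) : u ∉ S := by
  obtain ⟨p, hp⟩ := h; exact hp u p.start_mem_support

lemma ReachAvoid.right_not_mem {G : SimpleGraph V} {S : Set V} {u v : V}
    (h : ReachAvoid G S u v) : v ∉ S := by
  obtain ⟨p, hp⟩ := h; exact hp v p.end_mem_support

lemma reachAvoid_refl {G : SimpleGraph V} {S : Set V} {u : V} (h : u ∉ S) :
    ReachAvoid G S u u :=
  ⟨.nil, by intro w hw; simp [Walk.support_nil] at hw; subst hw; exact h⟩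

lemma ReachAvoid.symm {G : SimpleGraph V} {S : Set V} {u v : V}
    (h : ReachAvoid G S u v) : ReachAvoid G S v u := by
  obtain ⟨p, hp⟩ := h
  exact ⟨p.reverse, by intro w hw; rw [Walk.support_reverse, List.mem_reverse] at hw; exact hp w hw⟩

lemma ReachAvoid.trans {G : SimpleGraph V} {S : Set V} {u v w : V}
    (h1 : ReachAvoid G S u v) (h2 : ReachAvoid G S v w) : ReachAvoid G S u w := by
  obtain ⟨p, hp⟩ := h1; obtain ⟨q, hq⟩ := h2
  refine ⟨p.append q, fun x hx => ?_⟩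
  rcases (Walk.mem_support_append_iff _ _).mp hx with h | h
  · exact hp x h
  · exact hq x h

lemma ReachAvoid.adjExt {G : SimpleGraph V} {S : Set V} {u x y : V}
    (h : ReachAvoid G S u x) (hadj : G.Adj x y) (hy : y ∉ S) : ReachAvoid G S u y := by
  refine h.trans ⟨hadj.toWalk, fun w hw => ?_⟩
  simp [Adj.toWalk, Walk.support_cons, Walk.support_nil] at hw
  rcases hw with rfl | rfl
  · exact h.right_not_mem
  · exact hy

lemma mem_setReach {G : SimpleGraph V} {S : Set V} {u x : V} :
    x ∈ SetReach G S {u} ↔ ReachAvoid G S u x := by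
  simp [SetReach]

lemma IsSep.symm' {G : SimpleGraph V} {s t : V} {S : Set V}
    (h : IsSep G {s} {t} S) : IsSep G {t} {s} S :=
  ⟨h.2.1, h.1, fun a ha b hb hr => h.2.2 b hb a ha hr.symm⟩

lemma IsMinSep.symm' {G : SimpleGraph V} {s t : V} {S : Set V}
    (h : IsMinSep G {s} {t} S) : IsMinSep G {t} {s} S :=
  ⟨h.1.symm', fun S' h' => h.2 S' h'.symm'⟩

lemma IsSep.not_mem_left {G : SimpleGraph V} {s t : V} {S : Set V}
    (h : IsSep G {s} {t} S) : s ∉ S :=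
  fun hs => (Set.disjoint_singleton_right.mp h.1) hs

lemma IsSep.not_mem_right {G : SimpleGraph V} {s t : V} {S : Set V}
    (h : IsSep G {s} {t} S) : t ∉ S :=
  fun ht => (Set.disjoint_singleton_right.mp h.2.1) ht

lemma IsSep.not_reach {G : SimpleGraph V} {s t : V} {S : Set V}
    (h : IsSep G {s} {t} S) : ¬ ReachAvoid G S s t :=
  h.2.2 s rfl t rfl

lemma cross_sep {G : SimpleGraph V} {s t : V} {S T : Set V}
    (hS : IsSep G {s} {t} S) (hT : IsSep G {s} {t} T) :
    IsSep G {s} {t} ((S ∩ SetReach G T {s}) ∪ (S ∩ T) ∪ (T ∩ SetReach G S {s})) := by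
  set X := (S ∩ SetReach G T {s}) ∪ (S ∩ T) ∪ (T ∩ SetReach G S {s}) with hX
  have hXsub : X ⊆ S ∪ T := by
    intro w hw
    rcases hw with (hw | hw) | hw
    · exact Or.inl hw.1
    · exact Or.inl hw.1
    · exact Or.inr hw.1
  have hsX : s ∉ X := fun h => by
    rcases hXsub h with h | h
    · exact hS.not_mem_left h
    · exact hT.not_mem_left h
  have htX : t ∉ X := fun h => by
    rcases hXsub h with h | h
    · exact hS.not_mem_right h
    · exact hT.not_mem_right h
  refine ⟨Set.disjoint_singleton_right.mpr hsX, Set.disjoint_singleton_right.mpr htX, ?_⟩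
  intro a ha b hb
  rw [Set.mem_singleton_iff] at ha hb
  rw [ha, hb]
  rintro ⟨p, hp⟩
  -- walk from a vertex in both s-components, avoiding X, to t: impossible
  have key : ∀ (u w : V) (q : G.Walk u w), ReachAvoid G S s u → ReachAvoid G T s u →
      (∀ x ∈ q.support, x ∉ X) → ReachAvoid G S s w ∧ ReachAvoid G T s w := by
    intro u w q
    induction q with
    | nil => intro hQ hR _; exact ⟨hQ, hR⟩
    | cons hadj q ih =>
      rename_i u b w
      intro hQ hR hsup
      have hbsup : b ∈ (Walk.cons hadj q).support := by
        rw [Walk.support_cons]; exact List.mem_cons_of_mem _ q.start_mem_support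
      have hbX : b ∉ X := hsup b hbsup
      have hsup' : ∀ x ∈ q.support, x ∉ X :=
        fun x hx => hsup x (by rw [Walk.support_cons]; exact List.mem_cons_of_mem _ hx)
      by_cases hbS : b ∈ S
      · by_cases hbT : b ∈ T
        · exact (hbX (Or.inl (Or.inr ⟨hbS, hbT⟩))).elim
        · exact (hbX (Or.inl (Or.inl ⟨hbS, mem_setReach.mpr (hR.adjExt hadj hbT)⟩))).elim
      · by_cases hbT : b ∈ T
        · exact (hbX (Or.inr ⟨hbT, mem_setReach.mpr (hQ.adjExt hadj hbS)⟩)).elim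
        · exact ih (hQ.adjExt hadj hbS) (hR.adjExt hadj hbT) hsup'
  exact hS.not_reach (key s t p (reachAvoid_refl hS.not_mem_left) (reachAvoid_refl hT.not_mem_left) hp).1

lemma minsep_disjoint_comp [Fintype V] {G : SimpleGraph V} {s t : V} {S T : Set V}
    (hS : IsMinSep G {s} {t} S) (hT : IsMinSep G {s} {t} T)
    {v : V} (hsD : s ∉ SetReach G S {v}) (htD : t ∉ SetReach G S {v}) :
    T ∩ SetReach G S {v} = ∅ := by
  classical
  set D := SetReach G S {v} with hD
  set Qs := SetReach G S {s} with hQs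
  set Qt := SetReach G S {t} with hQt
  set Rs := SetReach G T {s} with hRs
  set Rt := SetReach G T {t} with hRt
  have hX : IsSep G {s} {t} ((S ∩ Rs) ∪ (S ∩ T) ∪ (T ∩ Qs)) := cross_sep hS.1 hT.1
  have hY : IsSep G {s} {t} ((S ∩ Rt) ∪ (S ∩ T) ∪ (T ∩ Qt)) :=
    (cross_sep hS.1.symm' hT.1.symm').symm'
  have h1 : S.ncard ≤ ((S ∩ Rs) ∪ (S ∩ T) ∪ (T ∩ Qs)).ncard := hS.2 _ hX
  have h2 : T.ncard ≤ ((S ∩ Rt) ∪ (S ∩ T) ∪ (T ∩ Qt)).ncard := hT.2 _ hY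
  have hXle : ((S ∩ Rs) ∪ (S ∩ T) ∪ (T ∩ Qs)).ncard ≤
      (S ∩ Rs).ncard + (S ∩ T).ncard + (T ∩ Qs).ncard :=
    le_trans (Set.ncard_union_le _ _) (by
      have := Set.ncard_union_le (S ∩ Rs) (S ∩ T); omega)
  have hYle : ((S ∩ Rt) ∪ (S ∩ T) ∪ (T ∩ Qt)).ncard ≤
      (S ∩ Rt).ncard + (S ∩ T).ncard + (T ∩ Qt).ncard :=
    le_trans (Set.ncard_union_le _ _) (by
      have := Set.ncard_union_le (S ∩ Rt) (S ∩ T); omega)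
  -- pairwise disjointness facts
  have dRsRt : Disjoint Rs Rt := by
    rw [Set.disjoint_left]
    intro x hx hx'
    exact hT.1.not_reach ((mem_setReach.mp hx).trans (mem_setReach.mp hx').symm)
  have dRsT : Disjoint Rs T := by
    rw [Set.disjoint_left]; intro x hx; exact (mem_setReach.mp hx).right_not_mem
  have dRtT : Disjoint Rt T := by
    rw [Set.disjoint_left]; intro x hx; exact (mem_setReach.mp hx).right_not_mem
  have dQsQt : Disjoint Qs Qt := by
    rw [Set.disjoint_left]
    intro x hx hx'
    exact hS.1.not_reach ((mem_setReach.mp hx).trans (mem_setReach.mp hx').symm)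
  have dQsS : Disjoint Qs S := by
    rw [Set.disjoint_left]; intro x hx; exact (mem_setReach.mp hx).right_not_mem
  have dQtS : Disjoint Qt S := by
    rw [Set.disjoint_left]; intro x hx; exact (mem_setReach.mp hx).right_not_mem
  have dDQs : Disjoint D Qs := by
    rw [Set.disjoint_left]
    intro x hx hx'
    exact hsD (mem_setReach.mpr ((mem_setReach.mp hx).trans (mem_setReach.mp hx').symm))
  have dDQt : Disjoint D Qt := by
    rw [Set.disjoint_left]
    intro x hx hx'
    exact htD (mem_setReach.mpr ((mem_setReach.mp hx).trans (mem_setReach.mp hx').symm))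
  have dDS : Disjoint D S := by
    rw [Set.disjoint_left]; intro x hx; exact (mem_setReach.mp hx).right_not_mem
  -- lower bound for |S|
  have hSsum : (S ∩ Rs).ncard + (S ∩ Rt).ncard + (S ∩ T).ncard ≤ S.ncard := by
    have e1 : ((S ∩ Rs) ∪ (S ∩ Rt)).ncard = (S ∩ Rs).ncard + (S ∩ Rt).ncard :=
      Set.ncard_union_eq (dRsRt.mono Set.inter_subset_right Set.inter_subset_right)
    have e2 : ((S ∩ Rs) ∪ (S ∩ Rt) ∪ (S ∩ T)).ncard =
        ((S ∩ Rs) ∪ (S ∩ Rt)).ncard + (S ∩ T).ncard :=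
      Set.ncard_union_eq (by
        rw [Set.disjoint_union_left]
        exact ⟨dRsT.mono Set.inter_subset_right Set.inter_subset_right,
               dRtT.mono Set.inter_subset_right Set.inter_subset_right⟩)
    have hsub : (S ∩ Rs) ∪ (S ∩ Rt) ∪ (S ∩ T) ⊆ S := by
      intro x hx; rcases hx with (h | h) | h <;> exact h.1
    have := Set.ncard_le_ncard hsub S.toFinite
    omega
  -- lower bound for |T|
  have hTsum : (T ∩ Qs).ncard + (T ∩ Qt).ncard + (S ∩ T).ncard + (T ∩ D).ncard ≤ T.ncard := by
    have e1 : ((T ∩ Qs) ∪ (T ∩ Qt)).ncard = (T ∩ Qs).ncard + (T ∩ Qt).ncard :=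
      Set.ncard_union_eq (dQsQt.mono Set.inter_subset_right Set.inter_subset_right)
    have e2 : ((T ∩ Qs) ∪ (T ∩ Qt) ∪ (S ∩ T)).ncard =
        ((T ∩ Qs) ∪ (T ∩ Qt)).ncard + (S ∩ T).ncard :=
      Set.ncard_union_eq (by
        rw [Set.disjoint_union_left]
        exact ⟨(dQsS.mono Set.inter_subset_right Set.inter_subset_left),
               (dQtS.mono Set.inter_subset_right Set.inter_subset_left)⟩)
    have e3 : ((T ∩ Qs) ∪ (T ∩ Qt) ∪ (S ∩ T) ∪ (T ∩ D)).ncard =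
        ((T ∩ Qs) ∪ (T ∩ Qt) ∪ (S ∩ T)).ncard + (T ∩ D).ncard :=
      Set.ncard_union_eq (by
        rw [Set.disjoint_union_left, Set.disjoint_union_left]
        refine ⟨⟨?_, ?_⟩, ?_⟩
        · exact (dDQs.symm.mono Set.inter_subset_right Set.inter_subset_right)
        · exact (dDQt.symm.mono Set.inter_subset_right Set.inter_subset_right)
        · exact (dDS.symm.mono Set.inter_subset_left Set.inter_subset_right))
    have hsub : (T ∩ Qs) ∪ (T ∩ Qt) ∪ (S ∩ T) ∪ (T ∩ D) ⊆ T := by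
      intro x hx
      rcases hx with ((h | h) | h) | h
      · exact h.1
      · exact h.1
      · exact h.2
      · exact h.1
    have := Set.ncard_le_ncard hsub T.toFinite
    omega
  have hzero : (T ∩ D).ncard = 0 := by omega
  exact (Set.ncard_eq_zero (T ∩ D).toFinite).mp hzero

lemma enter_comp {G : SimpleGraph V} {D T : Set V} {s : V} :
    ∀ (u a : V) (p : G.Walk u a), u ∉ D → a ∈ D → u ∈ SetReach G T {s} →
      (∀ w ∈ p.support, w ∉ T) → (Nbhd G D ∩ SetReach G T {s}).Nonempty := by
  intro u a p
  induction p with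
  | nil => intro hu ha _ _; exact (hu ha).elim
  | cons hadj q ih =>
    rename_i u b a'
    intro hu ha hur hsup
    have hbT : b ∉ T := hsup b (by
      rw [Walk.support_cons]; exact List.mem_cons_of_mem _ q.start_mem_support)
    have hbr : b ∈ SetReach G T {s} := mem_setReach.mpr ((mem_setReach.mp hur).adjExt hadj hbT)
    by_cases hbD : b ∈ D
    · exact ⟨u, ⟨hu, b, hbD, hadj.symm⟩, hur⟩
    · exact ih hbD ha hbr
        (fun w hw => hsup w (by rw [Walk.support_cons]; exact List.mem_cons_of_mem _ hw))

set_option linter.unusedVariables false in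
/-- Let `S` be a minimum `s,t`-separator, `D` a component of `G−S` avoiding `s` and `t`,
and `T_D = N_G(D)`. For every nonempty `A ⊆ D` and every minimum `s,t`-separator `T`:
`A ⊆ C_s(G−T)` iff `T_D ∩ C_s(G−T) ≠ ∅`. -/
theorem subset_comp_iff_nbhd_meets {V : Type*} [Fintype V] (G : SimpleGraph V) (s t : V)
    (hst : s ≠ t) (hadj : ¬ G.Adj s t) (S : Set V) (hS : IsMinSep G {s} {t} S)
    (D : Set V) (hD : ∃ v, v ∉ S ∧ D = SetReach G S {v}) (hsD : s ∉ D) (htD : t ∉ D)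
    (A : Set V) (hA : A.Nonempty) (hAD : A ⊆ D)
    (T : Set V) (hT : IsMinSep G {s} {t} T) :
    A ⊆ SetReach G T {s} ↔ (Nbhd G D ∩ SetReach G T {s}).Nonempty := by
  classical
  obtain ⟨v, hv, hDeq⟩ := hD
  subst hDeq
  have hTD : T ∩ SetReach G S {v} = ∅ := minsep_disjoint_comp hS hT hsD htD
  constructor
  · intro hsub
    obtain ⟨a, haA⟩ := hA
    obtain ⟨p, hp⟩ := mem_setReach.mp (hsub haA)
    exact enter_comp s a p hsD (hAD haA)
      (mem_setReach.mpr (reachAvoid_refl hT.1.not_mem_left)) hp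
  · rintro ⟨x, hxN, hxR⟩ a haA
    have haD := hAD haA
    obtain ⟨hxD, d, hdD, hdx⟩ := hxN
    have hda : ReachAvoid G S d a := (mem_setReach.mp hdD).symm.trans (mem_setReach.mp haD)
    obtain ⟨q, hq⟩ := hda
    have hqT : ∀ w ∈ q.support, w ∉ T := by
      intro w hw hwT
      have hdw : ReachAvoid G S d w :=
        ⟨q.takeUntil w hw, fun x hx => hq x ((q.support_takeUntil_subset hw) hx)⟩
      have : w ∈ T ∩ SetReach G S {v} :=
        ⟨hwT, mem_setReach.mpr ((mem_setReach.mp hdD).trans hdw)⟩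
      rw [hTD] at this; exact this
    have hdT : d ∉ T := hqT d q.start_mem_support
    exact mem_setReach.mpr (((mem_setReach.mp hxR).adjExt hdx.symm hdT).trans ⟨q, hqT⟩)
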